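/- arXiv:math/0702294 — 11 statements merged into one kernel-verified Lean document; each statement's English description precedes it below -/
import Mathlib

section
/- Every free abelian group K is weakly-α-separable for every infinite cardinal α: any subgroup K₁ of K of cardinality ≤ α is contained in a direct summand K₂ of K of cardinality ≤ α. -/
/-!
Fix a basis of `K` and let `S` be the set of basis indices occurring in the coordinates of
elements of `K₁`. Each element has finite support, so `#S ≤ α`, and `K₁` lies in the span of
the basis vectors indexed by `S`. That span has cardinality `≤ α` because `ℤ` is countable,
and the span of the remaining basis vectors is a complement of it.
-/

open Cardinal Submodule

universe u v

theorem Cardinal.mk_finsupp_le_max_of_countable (ι : Type u) (R : Type v) [Zero R] [Countable R] :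
    #(ι →₀ R) ≤ max (lift.{v} #ι) ℵ₀ := by
  classical
  have hprod : #(ι × R) ≤ max (lift.{v} #ι) ℵ₀ := by
    rw [mk_prod]
    calc lift.{v} #ι * lift.{u} #R ≤ lift.{v} #ι * ℵ₀ := by
          gcongr; exact lift_le_aleph0.2 mk_le_aleph0
      _ ≤ max (max (lift.{v} #ι) ℵ₀) ℵ₀ := mul_le_max _ _
      _ = max (lift.{v} #ι) ℵ₀ := by simp
  calc #(ι →₀ R) ≤ #(Finset (ι × R)) := mk_le_of_injective (Finsupp.graph_injective ι R)
    _ ≤ #(List (ι × R)) := mk_le_of_surjective List.toFinset_surjective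
    _ ≤ max ℵ₀ #(ι × R) := mk_list_le_max _
    _ ≤ max (lift.{v} #ι) ℵ₀ := max_le (le_max_right _ _) hprod

theorem Cardinal.mk_biUnion_finset_le {ι β : Type u} (s : Set β) (A : β → Finset ι) :
    #(⋃ x ∈ s, (A x : Set ι)) ≤ max #s ℵ₀ :=
  calc #(⋃ x ∈ s, (A x : Set ι)) ≤ #s * ⨆ x : s, #(A x : Set ι) := mk_biUnion_le _ s
    _ ≤ #s * ℵ₀ := by
        gcongr; exact ciSup_le' fun x ↦ (lt_aleph0_of_finite _).le
    _ ≤ max (max #s ℵ₀) ℵ₀ := mul_le_max _ _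
    _ = max #s ℵ₀ := by simp

namespace Module.Basis

section Semiring

variable {ι R M : Type*} [Semiring R] [AddCommMonoid M] [Module R M] (b : Basis ι R M)

def supportOf (s : Set M) : Set ι :=
  ⋃ x ∈ s, ↑(b.repr x).support

theorem subset_span_image_supportOf (s : Set M) : s ⊆ span R (b '' b.supportOf s) :=
  fun _ hx ↦ b.mem_span_image.2 <|
    Set.subset_biUnion_of_mem (u := fun x ↦ ((b.repr x).support : Set ι)) hx

theorem isCompl_span_image_compl (S : Set ι) :
    IsCompl (span R (b '' S)) (span R (b '' Sᶜ)) :=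
  b.linearIndependent.isCompl_span_image b.span_eq isCompl_compl

end Semiring

variable {ι M : Type u} {R : Type v} [Semiring R] [AddCommMonoid M] [Module R M]

theorem mk_supportOf_le (b : Basis ι R M) (s : Set M) : #(b.supportOf s) ≤ max #s ℵ₀ :=
  mk_biUnion_finset_le s fun x ↦ (b.repr x).support

theorem mk_span_image_le [Countable R] (b : Basis ι R M) (S : Set ι) :
    #(span R (b '' S)) ≤ max #S ℵ₀ := by
  let f := Finsupp.linearCombination R (b ∘ Subtype.val : S → M)
  have hrange : Set.range f = span R (b '' S) := by
    rw [← LinearMap.coe_range, Finsupp.range_linearCombination, Set.range_comp,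
      Subtype.range_coe]
  have hle := (mk_range_le_lift (f := f)).trans (lift_le.2 (mk_finsupp_le_max_of_countable S R))
  rw [hrange] at hle
  rw [← lift_le.{v}]
  simpa using hle

theorem exists_isCompl_of_mk_le [Countable R] (b : Basis ι R M) {α : Cardinal.{u}}
    (hα : ℵ₀ ≤ α) {s : Set M} (hs : #s ≤ α) :
    ∃ N : Submodule R M, s ⊆ N ∧ #N ≤ α ∧ ∃ N' : Submodule R M, IsCompl N N' := by
  have hS : #(b.supportOf s) ≤ α := (b.mk_supportOf_le s).trans (max_le hs hα)
  exact ⟨_, b.subset_span_image_supportOf s, (b.mk_span_image_le _).trans (max_le hS hα),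
    _, b.isCompl_span_image_compl _⟩

end Module.Basis

/-- Every free abelian group is weakly-α-separable for every infinite cardinal α:
any subgroup of cardinality ≤ α is contained in a direct summand of cardinality ≤ α. -/
theorem free_abelian_weakly_separable
    (K : Type*) [AddCommGroup K] [Module.Free ℤ K]
    (α : Cardinal) (hα : Cardinal.aleph0 ≤ α)
    (K₁ : AddSubgroup K) (hK₁ : Cardinal.mk K₁ ≤ α) :
    ∃ K₂ : AddSubgroup K, K₁ ≤ K₂ ∧ Cardinal.mk K₂ ≤ α ∧
      ∃ F : AddSubgroup K, IsCompl K₂ F := by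
  obtain ⟨N, hK₁N, hN, N', hNN'⟩ :=
    (Module.Free.chooseBasis ℤ K).exists_isCompl_of_mk_le hα (s := K₁) hK₁
  exact ⟨N.toAddSubgroup, hK₁N, hN, N'.toAddSubgroup,
    AddSubgroup.toIntSubmodule.symm.isCompl hNN'⟩
end

section
/- Let c : G → M be a surjective cellular cover of an infinite group M with central kernel K. If K is weakly-(|M|, β)-separable for some cardinal β ≥ |M|, and Hom(G, K) = 0, then |G| ≤ β. -/
/-!
Choose a set-theoretic section `s` of `c`. Its factor set `s m * s m' * (s (m * m'))⁻¹` takes at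
most `|M|` values in `K = ker c`, so the subgroup it generates lies in a direct summand `K₂` of `K`
with `|K₂| ≤ β`; write `K = K₂ × F`. Since `K` is central, `g ↦ g * (s (c g))⁻¹` is a homomorphism
`G → K` modulo the factor set, so composing it with the projection `K → F` gives a homomorphism
`G → F` that is the identity on `F`. As `Hom(G, K) = 0`, `F = 1`, hence `K = K₂` and
`|G| = |M| · |K₂| ≤ β`.
-/

open Cardinal

theorem Subgroup.cardinalMk_closure_range_le {G ι : Type u} [Group G] [Nonempty ι] (f : ι → G) :
    #(Subgroup.closure (Set.range f)) ≤ max #ι ℵ₀ := by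
  rw [← FreeGroup.range_lift_eq_closure, ← mk_freeGroup]
  exact mk_range_le

theorem Subgroup.exists_projection_of_inf_eq_bot {G : Type*} [Group G] {A B N : Subgroup G}
    (hcomm : ∀ a ∈ A, ∀ b ∈ B, Commute a b) (hinf : A ⊓ B = ⊥) (hsup : A ⊔ B = N) :
    ∃ p : N →* G, (∀ x : N, (x : G) ∈ A → p x = 1) ∧ (∀ x : N, (x : G) ∈ B → p x = x) ∧
      ∀ x, p x ∈ B := by
  let f := A.subtype.noncommCoprod B.subtype fun a b => hcomm a a.2 b b.2
  have hf : Function.Injective f := by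
    refine (MonoidHom.noncommCoprod_injective _ _ _).2
      ⟨A.subtype_injective, B.subtype_injective, ?_⟩
    rw [A.range_subtype, B.range_subtype, disjoint_iff, hinf]
  have hN : N ≤ f.range := by
    rw [show f.range = _ from MonoidHom.noncommCoprod_range _ _ _, A.range_subtype,
      B.range_subtype, hsup]
  let e := MonoidHom.ofInjective hf
  let q : N →* A × B := e.symm.toMonoidHom.comp (Subgroup.inclusion hN)
  refine ⟨B.subtype.comp ((MonoidHom.snd A B).comp q), ?_, ?_, fun x => (q x).2.2⟩
  · intro x hx
    have : e.symm (Subgroup.inclusion hN x) = (⟨x, hx⟩, 1) := by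
      rw [MulEquiv.symm_apply_eq]; ext; exact (mul_one _).symm
    simp [q, this]
  · intro x hx
    have : e.symm (Subgroup.inclusion hN x) = (1, ⟨x, hx⟩) := by
      rw [MulEquiv.symm_apply_eq]; ext; exact (one_mul _).symm
    simp [q, this]

section FactorSet

variable {G M : Type*} [Group G] [Group M] {c : G →* M} {s : M → G}

def factorSet (s : M → G) (p : M × M) : G := s p.1 * s p.2 * (s (p.1 * p.2))⁻¹

theorem factorSet_mem_ker (hs : Function.RightInverse s c) (p : M × M) :
    factorSet s p ∈ c.ker := by
  simp [factorSet, hs _]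

theorem factorSet_one_one : factorSet s (1, 1) = s 1 := by
  simp [factorSet]

theorem mul_inv_section_mem_ker (hs : Function.RightInverse s c) (g : G) :
    g * (s (c g))⁻¹ ∈ c.ker := by
  simp [hs _]

theorem mul_inv_section_mul (hcentral : c.ker ≤ Subgroup.center G)
    (hs : Function.RightInverse s c) (g h : G) :
    g * h * (s (c (g * h)))⁻¹ =
      g * (s (c g))⁻¹ * (h * (s (c h))⁻¹) * factorSet s (c g, c h) := by
  have hcomm : (s (c g))⁻¹ * (h * (s (c h))⁻¹) = h * (s (c h))⁻¹ * (s (c g))⁻¹ :=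
    Subgroup.mem_center_iff.mp (hcentral (mul_inv_section_mem_ker hs h)) _
  calc g * h * (s (c (g * h)))⁻¹ = g * (h * (s (c h))⁻¹ * (s (c g))⁻¹) *
        (s (c g) * s (c h) * (s (c g * c h))⁻¹) := by rw [map_mul]; group
    _ = _ := by rw [← hcomm]; simp only [factorSet, mul_assoc]

theorem exists_retraction_of_factorSet_mem (hcentral : c.ker ≤ Subgroup.center G)
    (hs : Function.RightInverse s c) {A B : Subgroup G} (hA : ∀ p, factorSet s p ∈ A)
    (hinf : A ⊓ B = ⊥) (hsup : A ⊔ B = c.ker) :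
    ∃ φ : G →* G, (∀ g, φ g ∈ B) ∧ ∀ b ∈ B, φ b = b := by
  have hcomm : ∀ a ∈ A, ∀ b ∈ B, Commute a b := fun a ha b _ =>
    Subgroup.mem_center_iff.mp (hcentral (hsup ▸ Subgroup.mem_sup_left ha)) b |>.symm
  obtain ⟨p, hpA, hpB, hp⟩ := Subgroup.exists_projection_of_inf_eq_bot hcomm hinf hsup
  -- `r` is a homomorphism up to the factor set, which `p` kills.
  let r (g : G) : c.ker := ⟨g * (s (c g))⁻¹, mul_inv_section_mem_ker hs g⟩
  let w (g h : G) : c.ker := ⟨factorSet s (c g, c h), factorSet_mem_ker hs _⟩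
  have hr : ∀ g h, r (g * h) = r g * r h * w g h := fun g h =>
    Subtype.ext (mul_inv_section_mul hcentral hs g h)
  refine ⟨MonoidHom.mk' (fun g => p (r g)) fun g h => ?_, fun g => hp _, fun b hb => ?_⟩
  · rw [hr, map_mul, hpA (w g h) (hA _), mul_one, map_mul]
  · have hb1 : c b = 1 := (hsup ▸ Subgroup.mem_sup_right hb : b ∈ c.ker)
    have hs1 : s 1 ∈ A := factorSet_one_one (s := s) ▸ hA (1, 1)
    let b' : c.ker := ⟨b, hsup ▸ Subgroup.mem_sup_right hb⟩
    let s1 : c.ker := ⟨s 1, hsup ▸ Subgroup.mem_sup_left hs1⟩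
    have : r b = b' * s1⁻¹ := Subtype.ext (by simp [r, b', s1, hb1])
    rw [MonoidHom.mk'_apply, this, map_mul, map_inv, hpA s1 hs1, hpB b' hb, inv_one, mul_one]

end FactorSet

theorem MonoidHom.cardinalMk_eq_mul_ker_of_surjective {G M : Type u} [Group G] [Group M]
    {c : G →* M} (hc : Function.Surjective c) : #G = #M * #c.ker := by
  rw [mk_congr Subgroup.groupEquivQuotientProdSubgroup, mk_prod, lift_id, lift_id,
    mk_congr (QuotientGroup.quotientKerEquivOfSurjective c hc).toEquiv]

theorem cellular_cover_weakly_separable_kernel_card_le_general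
    {G M : Type u} [Group G] [Group M] (c : G →* M)
    (hsurj : Function.Surjective c)
    (hM : Infinite M)
    (hcentral : c.ker ≤ Subgroup.center G)
    (β : Cardinal.{u}) (hβ : Cardinal.mk M ≤ β)
    -- `K = ker c` is weakly-(|M|, β)-separable: every subgroup of `K` of size ≤ |M|
    -- is contained in a direct summand of `K` of size ≤ β
    (hsep : ∀ K₁ : Subgroup G, K₁ ≤ c.ker → Cardinal.mk K₁ ≤ Cardinal.mk M →
      ∃ K₂ F : Subgroup G, K₁ ≤ K₂ ∧ K₂ ≤ c.ker ∧ F ≤ c.ker ∧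
        Cardinal.mk K₂ ≤ β ∧ K₂ ⊓ F = ⊥ ∧ K₂ ⊔ F = c.ker)
    -- Hom(G, K) = 0
    (hhom : ∀ f : G →* G, (∀ g : G, f g ∈ c.ker) → f = 1) :
    Cardinal.mk G ≤ β := by
  set s := Function.surjInv hsurj
  have hs : Function.RightInverse s c := Function.rightInverse_surjInv hsurj
  have hMinf : ℵ₀ ≤ #M := infinite_iff.mp hM
  set K₁ := Subgroup.closure (Set.range (factorSet s))
  have hK₁ : K₁ ≤ c.ker :=
    Subgroup.closure_le _ |>.2 <| Set.range_subset_iff.2 (factorSet_mem_ker hs)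
  have hK₁card : #K₁ ≤ #M :=
    (Subgroup.cardinalMk_closure_range_le _).trans <| by
      rw [mk_prod, lift_id, mul_eq_self hMinf, max_eq_left hMinf]
  obtain ⟨K₂, F, hK₁K₂, -, hF, hK₂card, hinf, hsup⟩ := hsep _ hK₁ hK₁card
  obtain ⟨φ, hφF, hφ⟩ := exists_retraction_of_factorSet_mem hcentral hs
    (fun p => hK₁K₂ (Subgroup.subset_closure ⟨p, rfl⟩)) hinf hsup
  have hφ1 : φ = 1 := hhom φ fun g => hF (hφF g)
  have hFbot : F = ⊥ := eq_bot_iff.2 fun b hb => by simpa [hφ1] using (hφ b hb).symm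
  calc #G = #M * #K₂ := by
        rw [MonoidHom.cardinalMk_eq_mul_ker_of_surjective hsurj, ← hsup, hFbot, sup_bot_eq]
    _ ≤ β * β := mul_le_mul' hβ hK₂card
    _ = β := mul_eq_self (hMinf.trans hβ)

/-- Let `c : G → M` be a surjective cellular cover of an infinite group `M` with
central kernel `K`. If `K` is weakly-(|M|, β)-separable for some `β ≥ |M|`, and
`Hom(G, K) = 0`, then `|G| ≤ β`. -/
theorem cellular_cover_weakly_separable_kernel_card_le
    {G M : Type u} [Group G] [Group M] (c : G →* M)
    (hsurj : Function.Surjective c)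
    (hM : Infinite M)
    (hcell : ∀ φ : G →* M, ∃! ψ : G →* G, c.comp ψ = φ)
    (hcentral : c.ker ≤ Subgroup.center G)
    (β : Cardinal.{u}) (hβ : Cardinal.mk M ≤ β)
    -- `K = ker c` is weakly-(|M|, β)-separable: every subgroup of `K` of size ≤ |M|
    -- is contained in a direct summand of `K` of size ≤ β
    (hsep : ∀ K₁ : Subgroup G, K₁ ≤ c.ker → Cardinal.mk K₁ ≤ Cardinal.mk M →
      ∃ K₂ F : Subgroup G, K₁ ≤ K₂ ∧ K₂ ≤ c.ker ∧ F ≤ c.ker ∧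
        Cardinal.mk K₂ ≤ β ∧ K₂ ⊓ F = ⊥ ∧ K₂ ⊔ F = c.ker)
    -- Hom(G, K) = 0
    (hhom : ∀ f : G →* G, (∀ g : G, f g ∈ c.ker) → f = 1) :
    Cardinal.mk G ≤ β :=
  cellular_cover_weakly_separable_kernel_card_le_general c hsurj hM hcentral β hβ hsep hhom
end

section
/- Let c : G → M be a cellular cover of an infinite group M. If the kernel K = ker c is a free abelian group, then |G| ≤ |M|. -/
/-!
The kernel `N` of a cellular cover is central, `Hom(G, N)` is trivial, and `G ⧸ N` embeds in `M`,
so it suffices to bound the rank `ι` of `N` by `|M|`. Let `H` be generated by a transversal of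
`N`: then `G = HN` and `|H ∩ N| ≤ |M|`. If `|ι| > |M|`, the finitely many basis coordinates used by
each element of `H ∩ N` leave some coordinate `j` vanishing on all of `H ∩ N`. Since `N` is
central, `hn ↦ πⱼ(n)` is then a well-defined homomorphism `G → N` extending the projection `πⱼ`
of `N` onto its `j`-th summand, and it is nontrivial.
-/

universe u v w x

open Cardinal

namespace MonoidHom

variable {G M : Type*} [Group G] [Group M] {c : G →* M}

theorem ker_le_center_of_injective_comp (hc : Function.Injective fun ψ : G →* G => c.comp ψ) :
    c.ker ≤ Subgroup.center G := by
  intro k hk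
  have hconj : (MulAut.conj k).toMonoidHom = MonoidHom.id G :=
    hc <| MonoidHom.ext fun g => by simp [c.mem_ker.mp hk]
  refine Subgroup.mem_center_iff.mpr fun g => ?_
  have h := DFunLike.congr_fun hconj g
  simp only [MulEquiv.coe_toMonoidHom, MulAut.conj_apply, id_apply] at h
  calc g * k = k * g * k⁻¹ * k := by rw [h]
    _ = k * g := by group

theorem eq_one_of_injective_comp (hc : Function.Injective fun ψ : G →* G => c.comp ψ)
    (f : G →* c.ker) : f = 1 := by
  have h : c.ker.subtype.comp f = 1 :=
    hc <| MonoidHom.ext fun g => by simp [c.mem_ker.mp (f g).2]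
  ext g
  exact DFunLike.congr_fun h g

end MonoidHom

namespace Subgroup

variable {G : Type u} [Group G]

theorem normal_of_le_center {N : Subgroup G} (hN : N ≤ center G) : N.Normal :=
  ⟨fun n hn g => by rw [mem_center_iff.mp (hN hn) g, mul_inv_cancel_right]; exact hn⟩

theorem exists_monoidHom_extension_of_le_center {N H : Subgroup G} (hN : N ≤ center G)
    (hHN : H ⊔ N = ⊤) {Q : Type*} [Group Q] (χ : N →* Q) (hχ : ∀ n : N, (n : G) ∈ H → χ n = 1) :
    ∃ φ : G →* Q, ∀ n : N, φ n = χ n := by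
  have := normal_of_le_center hN
  have hdec (g : G) : ∃ h ∈ H, ∃ n ∈ N, h * n = g := mem_sup_of_normal_right.mp (hHN ▸ mem_top g)
  choose h hh n hn hhn using hdec
  have hwd {x y : G} (hx : x ∈ H) (hy : y ∈ H) {a b : N} (hxy : x * a = y * b) : χ a = χ b := by
    have hab : ((a * b⁻¹ : N) : G) = x⁻¹ * y := by
      rw [coe_mul, coe_inv, mul_inv_eq_iff_eq_mul, mul_assoc, ← hxy, inv_mul_cancel_left]
    rw [← mul_inv_eq_one, ← map_inv, ← map_mul, hχ _ (hab ▸ mul_mem (inv_mem hx) hy)]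
  refine ⟨MonoidHom.mk' (fun g => χ ⟨n g, hn g⟩) fun g g' => ?_, fun m => ?_⟩
  · rw [← map_mul]
    refine hwd (hh (g * g')) (mul_mem (hh g) (hh g')) ?_
    calc h (g * g') * n (g * g') = (h g * n g) * (h g' * n g') := by rw [hhn, hhn, hhn]
      _ = h g * h g' * (n g * n g') := by
        rw [mul_assoc, ← mul_assoc (n g), ← mem_center_iff.mp (hN (hn g)), mul_assoc, mul_assoc]
  · exact hwd (hh _) (one_mem H) (by rw [hhn, one_mul])

theorem mk_closure_range_le {α : Type u} [Nonempty α] (f : α → G) :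
    #(closure (Set.range f)) ≤ max #α ℵ₀ := by
  rw [← FreeGroup.range_lift_eq_closure, ← mk_freeGroup]
  exact mk_le_of_surjective (FreeGroup.lift f).rangeRestrict_surjective

theorem closure_range_out_sup_eq_top (N : Subgroup G) :
    closure (Set.range (Quotient.out : G ⧸ N → G)) ⊔ N = ⊤ :=
  eq_top_iff.mpr fun g _ => by
    have h := mul_mem_sup (subset_closure (Set.mem_range_self (f := Quotient.out) (g : G ⧸ N)))
      (QuotientGroup.eq.mp (QuotientGroup.out_eq' (g : G ⧸ N)))
    rwa [mul_inv_cancel_left] at h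

end Subgroup

namespace Module.Basis

theorem exists_forall_repr_eq_zero {ι : Type u} {R : Type v} {A : Type w} {T : Type x}
    [Semiring R] [AddCommMonoid A] [Module R A] (b : Basis ι R A) (v : T → A)
    (hT : lift.{u} #T < lift.{x} #ι) (hι : ℵ₀ < #ι) : ∃ j, ∀ t, b.repr (v t) j = 0 := by
  have hsupp : #(⋃ t, ((b.repr (v t)).support : Set ι)) < #ι := by
    refine lift_lt.{u, x}.mp ((mk_iUnion_le_lift _).trans_lt ?_)
    have hι' : ℵ₀ < lift.{x} #ι := by simpa using hι
    refine mul_lt_of_lt hι'.le hT ((ciSup_le' fun t => ?_).trans_lt hι')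
    rw [lift_le_aleph0]
    exact (finset_card_lt_aleph0 _).le
  obtain ⟨j, hj⟩ : (⋃ t, ((b.repr (v t)).support : Set ι))ᶜ.Nonempty :=
    Set.nonempty_compl.mpr fun h => (h ▸ hsupp).ne mk_univ
  refine ⟨j, fun t => ?_⟩
  by_contra hne
  exact hj (Set.mem_iUnion_of_mem t (Finsupp.mem_support_iff.mpr hne))

theorem mk_le_max_aleph0 {ι A : Type u} [AddCommGroup A] (b : Basis ι ℤ A) :
    #A ≤ max #ι ℵ₀ := by
  rw [mk_congr b.repr.toEquiv]
  cases isEmpty_or_nonempty ι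
  · exact (mk_le_aleph0 (α := ι →₀ ℤ)).trans (le_max_right _ _)
  · simp [mk_finsupp_lift_of_infinite']

end Module.Basis

theorem Subgroup.mk_basisIndex_le_of_le_center {G ι : Type u} [Group G] {N : Subgroup G}
    (hN : N ≤ center G) (hhom : ∀ f : G →* N, f = 1) {R A : Type*} [Ring R] [Nontrivial R]
    [AddCommGroup A] [Module R A] (e : N ≃* Multiplicative A) (b : Module.Basis ι R A) :
    #ι ≤ max #(G ⧸ N) ℵ₀ := by
  by_contra! hlt
  have : Nonempty (G ⧸ N) := ⟨(1 : G)⟩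
  set H := closure (Set.range (Quotient.out : G ⧸ N → G))
  have hH : #(H ⊓ N : Subgroup G) < #ι :=
    ((mk_le_mk_of_subset inf_le_left).trans (mk_closure_range_le _)).trans_lt hlt
  obtain ⟨j, hj⟩ := b.exists_forall_repr_eq_zero
    (fun x : (H ⊓ N : Subgroup G) => (e ⟨x, x.2.2⟩).toAdd) (by simpa using hH)
    ((le_max_right _ _).trans_lt hlt)
  let π : A →+ A := ((b.coord j).smulRight (b j)).toAddMonoidHom
  let χ : N →* N := e.symm.toMonoidHom.comp ((AddMonoidHom.toMultiplicative π).comp e.toMonoidHom)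
  obtain ⟨φ, hφ⟩ := exists_monoidHom_extension_of_le_center hN
    (closure_range_out_sup_eq_top N) χ fun n hn => by simp [χ, π, hj ⟨n, hn, n.2⟩]
  set n₀ := e.symm (Multiplicative.ofAdd (b j))
  have hχn₀ : χ n₀ = n₀ := by simp [χ, π, n₀]
  have hn₀ : n₀ = 1 := by rw [← hχn₀, ← hφ, hhom φ, MonoidHom.one_apply]
  exact b.ne_zero j (ofAdd_eq_one.mp (e.symm.map_eq_one_iff.mp hn₀))

/-- Let `c : G → M` be a cellular cover of an infinite group `M`.  If the kernel
`K = ker c` is a free abelian group then `|G| ≤ |M|`. -/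
theorem cellular_cover_free_abelian_kernel_card_le
    {G M : Type u} [Group G] [Group M] (c : G →* M)
    (hM : Infinite M)
    (hcell : Function.Bijective fun ψ : G →* G => c.comp ψ)
    -- the kernel is a free abelian group
    (hfree : ∃ (A : Type u) (_ : AddCommGroup A) (_ : Module.Free ℤ A),
      Nonempty (c.ker ≃* Multiplicative A)) :
    Cardinal.mk G ≤ Cardinal.mk M := by
  obtain ⟨A, _, _, ⟨e⟩⟩ := hfree
  have hM₀ : ℵ₀ ≤ #M := aleph0_le_mk M
  have hquot : #(G ⧸ c.ker) ≤ #M :=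
    (mk_congr (QuotientGroup.quotientKerEquivRange c).toEquiv).trans_le (mk_set_le _)
  have hrank := Subgroup.mk_basisIndex_le_of_le_center
    (c.ker_le_center_of_injective_comp hcell.injective)
    (c.eq_one_of_injective_comp hcell.injective) e (Module.Free.chooseBasis ℤ A)
  have hker : #c.ker ≤ #M := calc
    #c.ker = #A := mk_congr (e.toEquiv.trans Multiplicative.toAdd)
    _ ≤ max #(Module.Free.ChooseBasisIndex ℤ A) ℵ₀ := (Module.Free.chooseBasis ℤ A).mk_le_max_aleph0
    _ ≤ #M := max_le (hrank.trans (max_le hquot hM₀)) hM₀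
  calc #G = #(G ⧸ c.ker) * #c.ker := by
        rw [mk_congr Subgroup.groupEquivQuotientProdSubgroup, mk_prod, lift_id, lift_id]
    _ ≤ #M * #M := mul_le_mul' hquot hker
    _ = #M := mul_eq_self hM₀
end

section
/- Let G be an abelian group with subgroups K such that, setting M = G/K and c : G → M the quotient map: (i) End(M) ≅ ℤ (every endomorphism of M is multiplication by an integer); (ii) K is fully invariant in G; (iii) Hom(K, M) = 0 and Hom(G, K) = 0. Then End(G) ≅ ℤ, i.e., every endomorphism of G is multiplication by an integer. -/
/-- Let `G` be abelian, `K ≤ G`, `M = G/K`.  If (i) every endomorphism of `M` is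
multiplication by an integer, (ii) `K` is fully invariant in `G`, and
(iii) `Hom(K, M) = 0` and `Hom(G, K) = 0`, then every endomorphism of `G` is
multiplication by an integer. -/
theorem end_eq_int_of_quotient
    {G : Type*} [AddCommGroup G] (K : AddSubgroup G)
    (hEndM : ∀ φ : G ⧸ K →+ G ⧸ K, ∃ n : ℤ, ∀ x, φ x = n • x)
    (hfi : ∀ μ : G →+ G, ∀ x ∈ K, μ x ∈ K)
    (hKM : ∀ f : K →+ G ⧸ K, f = 0)
    (hGK : ∀ f : G →+ K, f = 0) :
    ∀ μ : G →+ G, ∃ n : ℤ, ∀ x, μ x = n • x := by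
  intro μ
  -- induced endomorphism of the quotient
  let φ : G ⧸ K →+ G ⧸ K :=
    QuotientAddGroup.map K K μ (fun x hx => hfi μ x hx)
  obtain ⟨n, hn⟩ := hEndM φ
  refine ⟨n, fun x => ?_⟩
  -- μ x - n • x lies in K
  have hmem : ∀ x : G, μ x - n • x ∈ K := by
    intro x
    have h1 : ((QuotientAddGroup.mk (μ x - n • x) : G ⧸ K)) = 0 := by
      have : φ (QuotientAddGroup.mk x) = QuotientAddGroup.mk (μ x) := rfl
      have h2 := hn (QuotientAddGroup.mk x)
      rw [this] at h2
      have : (QuotientAddGroup.mk (μ x - n • x) : G ⧸ K)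
          = QuotientAddGroup.mk (μ x) - n • QuotientAddGroup.mk x := by
        simp [QuotientAddGroup.mk_sub]
      rw [this, h2, sub_self]
    exact (QuotientAddGroup.eq_zero_iff _).mp h1
  -- package as a hom G →+ K and use hGK
  let f : G →+ K := (μ - (zsmulAddGroupHom n : G →+ G)).codRestrict K
    (fun x => by simpa using hmem x)
  have hf := hGK f
  have := congrArg (fun g => ((g x : K) : G)) hf
  simp only [f, AddMonoidHom.codRestrict_apply, AddMonoidHom.sub_apply,
    zsmulAddGroupHom_apply, AddMonoidHom.zero_apply, ZeroMemClass.coe_zero] at this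
  exact sub_eq_zero.mp this
end

section
/- Let G be an abelian group with a subgroup K such that: End(G/K) ≅ ℤ, K is fully invariant in G, and Hom(K, G/K) = 0 = Hom(G, K). Then the quotient map c : G → G/K is a cellular cover, i.e., composition with c induces a bijection Hom(G,G) → Hom(G, G/K). -/
/-!
Two endomorphisms of `G` that agree modulo `K` differ by a homomorphism `G → K`, so they are
equal. A homomorphism `φ : G → G/K` restricts to zero on `K`, hence factors through an
endomorphism of `G/K`, which is multiplication by some `n : ℤ`; then `φ = c ∘ (n • id)`.
-/

theorem AddSubgroup.le_ker_of_forall_eq_zero {G M : Type*} [AddGroup G] [AddGroup M]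
    (K : AddSubgroup G)
    (hKM : ∀ f : K →+ M, f = 0) (φ : G →+ M) : K ≤ φ.ker := fun x hx =>
  φ.mem_ker.mpr (DFunLike.congr_fun (hKM (φ.comp K.subtype)) ⟨x, hx⟩)

namespace QuotientAddGroup

theorem mk'_comp_injective {H G : Type*} [AddGroup H] [AddCommGroup G] (K : AddSubgroup G)
    (hHK : ∀ f : H →+ K, f = 0) :
    Function.Injective fun ψ : H →+ G => (mk' K).comp ψ := by
  intro ψ₁ ψ₂ h
  have hmem : ∀ x, (ψ₁ - ψ₂) x ∈ K := fun x =>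
    (eq_iff_sub_mem).mp (DFunLike.congr_fun h x)
  ext x
  have hx := congrArg (fun f : H →+ K => (f x : G)) (hHK ((ψ₁ - ψ₂).codRestrict K hmem))
  exact sub_eq_zero.mp hx

theorem exists_zsmul_comp_eq {G : Type*} [AddCommGroup G] (K : AddSubgroup G)
    (hEndM : ∀ φ : G ⧸ K →+ G ⧸ K, ∃ n : ℤ, ∀ x, φ x = n • x)
    {φ : G →+ G ⧸ K} (hφ : K ≤ φ.ker) :
    ∃ n : ℤ, (mk' K).comp (n • AddMonoidHom.id G) = φ := by
  obtain ⟨n, hn⟩ := hEndM (lift K φ hφ)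
  refine ⟨n, AddMonoidHom.ext fun x => ?_⟩
  simpa using (hn (x : G ⧸ K)).symm

end QuotientAddGroup

theorem quotient_is_cellular_cover_general
    {G : Type*} [AddCommGroup G] (K : AddSubgroup G)
    (hEndM : ∀ φ : G ⧸ K →+ G ⧸ K, ∃ n : ℤ, ∀ x, φ x = n • x)
    (hKM : ∀ f : K →+ G ⧸ K, f = 0)
    (hGK : ∀ f : G →+ K, f = 0) :
    Function.Bijective fun ψ : G →+ G => (QuotientAddGroup.mk' K).comp ψ := by
  refine ⟨QuotientAddGroup.mk'_comp_injective K hGK, fun φ => ?_⟩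
  obtain ⟨n, hn⟩ := QuotientAddGroup.exists_zsmul_comp_eq K hEndM
    (AddSubgroup.le_ker_of_forall_eq_zero K hKM φ)
  exact ⟨n • AddMonoidHom.id G, hn⟩

/-- Let `G` be abelian and `K ≤ G` with `End(G/K) ≅ ℤ`, `K` fully invariant in `G`
and `Hom(K, G/K) = 0 = Hom(G, K)`.  Then the quotient map `c : G → G/K` is a
cellular cover: composition with `c` gives a bijection `Hom(G,G) → Hom(G, G/K)`. -/
theorem quotient_is_cellular_cover
    {G : Type*} [AddCommGroup G] (K : AddSubgroup G)
    (hEndM : ∀ φ : G ⧸ K →+ G ⧸ K, ∃ n : ℤ, ∀ x, φ x = n • x)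
    (hfi : ∀ μ : G →+ G, ∀ x ∈ K, μ x ∈ K)
    (hKM : ∀ f : K →+ G ⧸ K, f = 0)
    (hGK : ∀ f : G →+ K, f = 0) :
    Function.Bijective fun ψ : G →+ G => (QuotientAddGroup.mk' K).comp ψ :=
  quotient_is_cellular_cover_general K hEndM hKM hGK
end

section
/- Let A ⊆ B be torsion-free abelian groups (viewed inside the ℚ-vector space ℚ ⊗ A), let π₁ and π₂ be disjoint sets of primes. If A is π₁-reduced (i.e., for each prime p ∈ π₁, ⋂_{i≥1} pⁱA = 0) and B/A is a π₂-group (every element has order a product of primes from π₂), then B is π₁-reduced. -/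
/-- Let `A ⊆ B` be torsion-free abelian groups, `π₁, π₂` disjoint sets of primes.
If `A` is `π₁`-reduced and `B/A` is a `π₂`-group, then `B` is `π₁`-reduced. -/
theorem reduced_of_quotient_pi_group
    {B : Type*} [AddCommGroup B] [NoZeroSMulDivisors ℤ B]
    (A : AddSubgroup B)
    (π₁ π₂ : Set ℕ) (hπ₁ : ∀ p ∈ π₁, Nat.Prime p) (hπ₂ : ∀ p ∈ π₂, Nat.Prime p)
    (hdisj : Disjoint π₁ π₂)
    -- A is π₁-reduced
    (hred : ∀ p ∈ π₁, ∀ x ∈ A, (∀ i : ℕ, ∃ y ∈ A, x = (p : ℤ) ^ i • y) → x = 0)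
    -- B/A is a π₂-group
    (hquot : ∀ x : B, ∃ n : ℕ, 0 < n ∧ (∀ p : ℕ, p.Prime → p ∣ n → p ∈ π₂) ∧ n • x ∈ A) :
    -- B is π₁-reduced
    ∀ p ∈ π₁, ∀ x : B, (∀ i : ℕ, ∃ y : B, x = (p : ℤ) ^ i • y) → x = 0 := by
  intro p hp x hdiv
  obtain ⟨n, hn, hnπ, hnx⟩ := hquot x
  have hnxA : (n : ℤ) • x ∈ A := by rw [natCast_zsmul]; exact hnx
  have hnx0 : (n : ℤ) • x = 0 := by
    refine hred p hp _ hnxA ?_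
    intro i
    obtain ⟨y, hy⟩ := hdiv i
    obtain ⟨m, hm, hmπ, hmy⟩ := hquot y
    -- p does not divide m, hence coprime
    have hpm : ¬ p ∣ m := fun h =>
      (hdisj.ne_of_mem hp (hmπ p (hπ₁ p hp) h)) rfl
    have hcop : IsCoprime ((m : ℤ)) ((p : ℤ) ^ i) := by
      rw [← Nat.cast_pow, Nat.isCoprime_iff_coprime]
      exact ((((hπ₁ p hp).coprime_iff_not_dvd).mpr hpm).symm).pow_right i
    obtain ⟨a, b, hab⟩ := hcop
    refine ⟨((a * m + b * (p : ℤ) ^ i) * n) • y, ?_, ?_⟩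
    · have hsplit : ((a * m + b * (p : ℤ) ^ i) * n) • y
          = (a * n) • ((m : ℤ) • y) + b • ((n : ℤ) • ((p : ℤ) ^ i • y)) := by
        rw [smul_smul, smul_smul, smul_smul, ← add_smul]
        congr 1; ring
      rw [hsplit, ← hy]
      refine A.add_mem (A.zsmul_mem ?_ _) (A.zsmul_mem hnxA _)
      rw [natCast_zsmul]; exact hmy
    · have hx : (n : ℤ) • x = ((n : ℤ) * (p : ℤ) ^ i) • y := by rw [mul_smul, ← hy]
      rw [hx, smul_smul]
      congr 1
      linear_combination (-(p : ℤ) ^ i * n) * hab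
  rcases smul_eq_zero.mp hnx0 with h | h
  · exact absurd h (by exact_mod_cast hn.ne')
  · exact h
end

section
/- Let L be a torsion-free abelian group, q a prime, and x ∈ L a q-pure element (x is not divisible by q in L). Then the subgroup L ⊕ₓ ℤ[1/q] := ⟨L ∪ {x/qⁱ : i ≥ 1}⟩ of ℚ ⊗ L is isomorphic to the quotient (L ⊕ ℤ[1/q]) / ⟨(-x, 1)⟩. -/
/-!
The homomorphism `L × ℤ[1/q] → ℚ ⊗ L`, `(l, r) ↦ l + r • x`, has image `⟨L ∪ {x/qⁱ}⟩`.
Its kernel consists of the `(l, r)` with `r • x = -l ∈ L`. The denominator `d` of such an `r`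
is a power of `q`, and Bézout for `r = a/d` gives `x/d ∈ L`; by `q`-purity of `x` this forces
`d = 1`, so the kernel is generated by `(-x, 1)`.
-/

/-- The additive subgroup `ℤ[1/q]` of `ℚ`. -/
def zInvPow (q : ℕ) : AddSubgroup ℚ :=
  AddSubgroup.closure (Set.range fun i : ℕ => ((q : ℚ) ^ i)⁻¹)

theorem one_mem_zInvPow (q : ℕ) : (1 : ℚ) ∈ zInvPow q := by
  have h : ((q : ℚ) ^ 0)⁻¹ = 1 := by norm_num
  exact h ▸ AddSubgroup.subset_closure (Set.mem_range_self 0)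

theorem exists_den_dvd_pow_of_mem_zInvPow {q : ℕ} {r : ℚ} (hr : r ∈ zInvPow q) :
    ∃ k, r.den ∣ q ^ k := by
  induction hr using AddSubgroup.closure_induction with
  | mem r hr =>
    obtain ⟨i, rfl⟩ := hr
    refine ⟨i, ?_⟩
    show ((q : ℚ) ^ i)⁻¹.den ∣ q ^ i
    rw [← Nat.cast_pow, Rat.inv_natCast_den]
    split_ifs <;> simp
  | zero => exact ⟨0, by simp⟩
  | add r s _ _ ihr ihs =>
    obtain ⟨k, hk⟩ := ihr
    obtain ⟨m, hm⟩ := ihs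
    exact ⟨k + m, (Rat.add_den_dvd r s).trans (pow_add q k m ▸ Nat.mul_dvd_mul hk hm)⟩
  | neg r _ ih => simpa using ih

section

variable {V : Type*} [AddCommGroup V] [Module ℚ V]

theorem inv_den_smul_mem {L : AddSubgroup V} {x : V} (hx : x ∈ L) {r : ℚ} (hr : r • x ∈ L) :
    (r.den : ℚ)⁻¹ • x ∈ L := by
  obtain ⟨u, v, huv⟩ : IsCoprime r.num (r.den : ℤ) :=
    Int.isCoprime_iff_gcd_eq_one.mpr r.reduced
  have hden : (r.den : ℚ)⁻¹ = u * r + v := by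
    have hd : (r.den : ℚ) ≠ 0 := by positivity
    have huv' : (u : ℚ) * r.num + v * r.den = 1 := by exact_mod_cast huv
    calc (r.den : ℚ)⁻¹ = (r.den : ℚ)⁻¹ * (u * r.num + v * r.den) := by rw [huv', mul_one]
      _ = u * (r.num / r.den) + v := by field_simp
      _ = u * r + v := by rw [Rat.num_div_den]
  rw [hden, add_smul, mul_smul, Int.cast_smul_eq_zsmul, Int.cast_smul_eq_zsmul]
  exact L.add_mem (L.zsmul_mem hr u) (L.zsmul_mem hx v)

theorem den_eq_one_of_smul_mem {L : AddSubgroup V} {q : ℕ} (hq : q.Prime) {x : V} (hx : x ∈ L)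
    (hpure : ¬∃ y ∈ L, x = q • y) {r : ℚ} {k : ℕ} (hk : r.den ∣ q ^ k) (hr : r • x ∈ L) :
    r.den = 1 := by
  obtain ⟨i, -, hi⟩ := (Nat.dvd_prime_pow hq).1 hk
  obtain _ | j := i
  · simpa using hi
  refine absurd ⟨q ^ j • (r.den : ℚ)⁻¹ • x, L.nsmul_mem (inv_den_smul_mem hx hr) _, ?_⟩ hpure
  rw [← mul_nsmul', ← pow_succ', ← hi, ← Nat.cast_smul_eq_nsmul ℚ, smul_smul,
    mul_inv_cancel₀ (by positivity), one_smul]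

def addSMulHom (L : AddSubgroup V) (R : AddSubgroup ℚ) (x : V) : L × R →+ V :=
  L.subtype.coprod (((smulAddHom ℚ V).flip x).comp R.subtype)

@[simp]
theorem addSMulHom_apply (L : AddSubgroup V) (R : AddSubgroup ℚ) (x : V) (p : L × R) :
    addSMulHom L R x p = p.1 + (p.2 : ℚ) • x :=
  rfl

theorem range_addSMulHom (L : AddSubgroup V) (R : AddSubgroup ℚ) (x : V) :
    (addSMulHom L R x).range = L ⊔ R.map ((smulAddHom ℚ V).flip x) := by
  ext v
  simp [AddSubgroup.mem_sup, eq_comm]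

theorem range_addSMulHom_closure (L : AddSubgroup V) (s : Set ℚ) (x : V) :
    (addSMulHom L (AddSubgroup.closure s) x).range =
      AddSubgroup.closure (L ∪ (· • x) '' s) := by
  rw [range_addSMulHom, AddMonoidHom.map_closure, AddSubgroup.closure_union,
    AddSubgroup.closure_eq]
  rfl

theorem range_addSMulHom_zInvPow {L : AddSubgroup V} {x : V} (hx : x ∈ L) (q : ℕ) :
    (addSMulHom L (zInvPow q) x).range =
      AddSubgroup.closure (L ∪ {y : V | ∃ i : ℕ, 1 ≤ i ∧ y = ((q : ℚ) ^ i)⁻¹ • x}) := by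
  rw [zInvPow, range_addSMulHom_closure]
  congr 1
  ext y
  constructor
  · rintro (hy | ⟨_, ⟨_ | i, rfl⟩, rfl⟩)
    · exact Or.inl hy
    · exact Or.inl (by simpa using hx)
    · exact Or.inr ⟨i + 1, by omega, rfl⟩
  · rintro (hy | ⟨i, -, rfl⟩)
    · exact Or.inl hy
    · exact Or.inr ⟨_, ⟨i, rfl⟩, rfl⟩

theorem ker_addSMulHom {L : AddSubgroup V} {R : AddSubgroup ℚ} (hR : (1 : ℚ) ∈ R) {x : V}
    (hx : x ∈ L) (hint : ∀ r ∈ R, r • x ∈ L → ∃ b : ℤ, r = b) :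
    (addSMulHom L R x).ker = AddSubgroup.zmultiples (⟨-x, L.neg_mem hx⟩, ⟨1, hR⟩) := by
  apply le_antisymm
  · rintro ⟨⟨l, hl⟩, ⟨r, hr⟩⟩ hp
    have hl' : l = -(r • x) := eq_neg_of_add_eq_zero_left hp
    obtain ⟨b, rfl⟩ := hint r hr (neg_neg (r • x) ▸ hl' ▸ L.neg_mem hl)
    refine ⟨b, ?_⟩
    ext <;> simp [hl', Int.cast_smul_eq_zsmul]
  · rw [AddSubgroup.zmultiples_le]
    simp

theorem ker_addSMulHom_zInvPow {L : AddSubgroup V} {q : ℕ} (hq : q.Prime) {x : V} (hx : x ∈ L)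
    (hpure : ¬∃ y ∈ L, x = q • y) :
    (addSMulHom L (zInvPow q) x).ker =
      AddSubgroup.zmultiples (⟨-x, L.neg_mem hx⟩, ⟨1, one_mem_zInvPow q⟩) := by
  refine ker_addSMulHom _ hx fun r hr hrx => ⟨r.num, ?_⟩
  obtain ⟨k, hk⟩ := exists_den_dvd_pow_of_mem_zInvPow hr
  exact ((Rat.den_eq_one_iff r).1 (den_eq_one_of_smul_mem hq hx hpure hk hrx)).symm

end

theorem adjoining_q_power_roots_iso_quotient_general
    {V : Type*} [AddCommGroup V] [Module ℚ V]
    (L : AddSubgroup V) (q : ℕ) (hq : q.Prime)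
    (x : V) (hx : x ∈ L)
    (hpure : ¬∃ y ∈ L, x = q • y) :
    Nonempty
      ((↥L × ↥(zInvPow q)) ⧸
          AddSubgroup.zmultiples
            ((⟨-x, L.neg_mem hx⟩, ⟨1, one_mem_zInvPow q⟩) : ↥L × ↥(zInvPow q)) ≃+
        ↥(AddSubgroup.closure
            (↑L ∪ {y : V | ∃ i : ℕ, 1 ≤ i ∧ y = ((q : ℚ) ^ i)⁻¹ • x}))) :=
  ⟨(QuotientAddGroup.quotientAddEquivOfEq (ker_addSMulHom_zInvPow hq hx hpure)).symm.trans <|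
    (QuotientAddGroup.quotientKerEquivRange _).trans <|
      AddEquiv.addSubgroupCongr (range_addSMulHom_zInvPow hx q)⟩

/-- Let `L` be a torsion-free abelian group (realized as a subgroup of a `ℚ`-vector
space `V`), `q` a prime and `x ∈ L` a `q`-pure element.  Then the subgroup
`L ⊕ₓ ℤ[1/q] = ⟨L ∪ {x/qⁱ : i ≥ 1}⟩` of `V` is isomorphic to
`(L ⊕ ℤ[1/q]) / ⟨(-x, 1)⟩`. -/
theorem adjoining_q_power_roots_iso_quotient
    {V : Type*} [AddCommGroup V] [Module ℚ V]
    (L : AddSubgroup V) (q : ℕ) (hq : q.Prime)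
    (x : V) (hx : x ∈ L) (hxne : x ≠ 0)
    (hpure : ¬∃ y ∈ L, x = q • y) :
    Nonempty
      ((↥L × ↥(zInvPow q)) ⧸
          AddSubgroup.zmultiples
            ((⟨-x, L.neg_mem hx⟩, ⟨1, one_mem_zInvPow q⟩) : ↥L × ↥(zInvPow q)) ≃+
        ↥(AddSubgroup.closure
            (↑L ∪ {y : V | ∃ i : ℕ, 1 ≤ i ∧ y = ((q : ℚ) ^ i)⁻¹ • x}))) :=
  adjoining_q_power_roots_iso_quotient_general L q hq x hx hpure
end

section
/- Let R be a subring of ℚ, M an R-module with End_ℤ(M) = R (every additive endomorphism is multiplication by an element of R), and A an abelian group with H ⊆ A ⊆ M where R ⊗ A = M (i.e., every element of M is an R-multiple of an element of A). Then every additive endomorphism of A extends to an endomorphism of M, so End(A) ⊆ R, i.e., every endomorphism of A is multiplication by some element of R. -/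
private lemma aux_den_smul {M : Type*} [AddCommGroup M] (R : Subring ℚ) [Module R M]
    (r : R) (x : M) : (((r : ℚ).den : ℤ)) • (r • x) = (r : ℚ).num • x := by
  have h2 : ((((r : ℚ).den : ℤ) : R) * r) = (((r : ℚ).num : ℤ) : R) := by
    have hd : (((r : ℚ).den : ℚ)) ≠ 0 := by exact_mod_cast (r : ℚ).den_nz
    have hq := (div_eq_iff hd).mp (Rat.num_div_den (r : ℚ))
    apply Subtype.ext
    push_cast
    rw [mul_comm]
    exact hq.symm
  rw [← Int.cast_smul_eq_zsmul R, smul_smul, h2, Int.cast_smul_eq_zsmul]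

/-- Let `R ⊆ ℚ` be a subring, `M` an `R`-module with `End_ℤ(M) = R`, and `A` an
abelian group with `H ⊆ A ⊆ M` where `R ⊗ A = M`.  Then every additive
endomorphism of `A` extends to one of `M`, and `End(A) ⊆ R`. -/
theorem end_subring_of_generating_subgroup
    {M : Type*} [AddCommGroup M] [NoZeroSMulDivisors ℤ M]
    (R : Subring ℚ) [Module R M]
    (hEndM : ∀ f : M →+ M, ∃ r : R, ∀ x : M, f x = r • x)
    (H A : AddSubgroup M) (hHA : H ≤ A)
    -- R ⊗ A = M : every element of M is an R-multiple of an element of A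
    (hgen : ∀ m : M, ∃ (r : R) (a : A), m = r • (a : M)) :
    ∀ f : ↥A →+ ↥A,
      (∃ g : M →+ M, ∀ a : ↥A, g (a : M) = ((f a : ↥A) : M)) ∧
      ∃ r : R, ∀ a : ↥A, ((f a : ↥A) : M) = r • (a : M) := by
  intro f
  choose rr aa hrep using hgen
  have key : ∀ (s t u : R) (b c d : ↥A), s • (b : M) = t • (c : M) + u • (d : M) →
      s • ((f b : ↥A) : M) = t • ((f c : ↥A) : M) + u • ((f d : ↥A) : M) := by
    intro s t u b c d h
    set n1 : ℤ := ((s : ℚ).den : ℤ) with hn1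
    set n2 : ℤ := ((t : ℚ).den : ℤ) with hn2
    set n3 : ℤ := ((u : ℚ).den : ℤ) with hn3
    have hn1' : n1 ≠ 0 := by rw [hn1]; exact_mod_cast (s : ℚ).den_nz
    have hn2' : n2 ≠ 0 := by rw [hn2]; exact_mod_cast (t : ℚ).den_nz
    have hn3' : n3 ≠ 0 := by rw [hn3]; exact_mod_cast (u : ℚ).den_nz
    have hN : n1 * n2 * n3 ≠ 0 := by positivity
    have e1 : ∀ x : M, (n1 * n2 * n3) • (s • x) = ((n2 * n3) * (s : ℚ).num) • x := by
      intro x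
      rw [show n1 * n2 * n3 = (n2 * n3) * n1 by ring, mul_smul, aux_den_smul, ← mul_smul]
    have e2 : ∀ x : M, (n1 * n2 * n3) • (t • x) = ((n1 * n3) * (t : ℚ).num) • x := by
      intro x
      rw [show n1 * n2 * n3 = (n1 * n3) * n2 by ring, mul_smul, aux_den_smul, ← mul_smul]
    have e3 : ∀ x : M, (n1 * n2 * n3) • (u • x) = ((n1 * n2) * (u : ℚ).num) • x := by
      intro x
      rw [show n1 * n2 * n3 = (n1 * n2) * n3 by ring, mul_smul, aux_den_smul, ← mul_smul]
    have hA : ((n2 * n3) * (s : ℚ).num) • b =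
        ((n1 * n3) * (t : ℚ).num) • c + ((n1 * n2) * (u : ℚ).num) • d := by
      apply Subtype.coe_injective
      push_cast
      rw [← e1, ← e2, ← e3, ← smul_add, h]
    have hf := congrArg f hA
    rw [map_add, map_zsmul, map_zsmul, map_zsmul] at hf
    apply smul_right_injective M hN
    show (n1 * n2 * n3) • _ = (n1 * n2 * n3) • _
    rw [smul_add, e1, e2, e3]
    exact_mod_cast congrArg (Subtype.val) hf
  have hwd : ∀ (s : R) (b : ↥A) (m : M), m = s • (b : M) →
      rr m • ((f (aa m) : ↥A) : M) = s • ((f b : ↥A) : M) := by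
    intro s b m hm
    have h0 : rr m • ((aa m : M)) = s • (b : M) + (0 : R) • ((0 : ↥A) : M) := by
      rw [← hrep m, hm]; simp
    have := key (rr m) s 0 (aa m) b 0 h0
    simpa using this
  set G : M → M := fun m => rr m • ((f (aa m) : ↥A) : M) with hG
  have hadd : ∀ x y, G (x + y) = G x + G y := by
    intro x y
    have h : rr (x + y) • ((aa (x + y) : M)) = rr x • (aa x : M) + rr y • (aa y : M) := by
      rw [← hrep, ← hrep, ← hrep]
    exact key _ _ _ _ _ _ h
  let g : M →+ M := AddMonoidHom.mk' G hadd
  have hg : ∀ a : ↥A, g (a : M) = ((f a : ↥A) : M) := by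
    intro a
    have := hwd 1 a (a : M) (by simp)
    simpa [g, AddMonoidHom.mk', hG] using this
  obtain ⟨r, hr⟩ := hEndM g
  exact ⟨⟨g, hg⟩, r, fun a => by rw [← hg, hr]⟩
end

section
/- Let G be an abelian group with subgroups K and M̂ such that G = K + M̂, and let c : G → G/K be the quotient map. Assume: (i) K is torsion-free and fully invariant in G; (ii) K is an R-module for a subring R ⊆ ℚ and every endomorphism of K is multiplication by an element of R; (iii) G/K is torsion-free and End(G/K) ≅ ℤ; (iv) Hom(M̂, K) = 0 and Hom(K, G/K) = 0; (v) K ∩ M̂ ≠ 0. Then Hom(G, K) = 0. -/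
/-- Let `G` be abelian with subgroups `K, M̂` such that `G = K + M̂`, where
(i) `K` is torsion-free and fully invariant; (ii) `K` is an `R`-module for a
subring `R ⊆ ℚ` and every endomorphism of `K` is multiplication by an element of
`R`; (iii) `G/K` is torsion-free with `End(G/K) ≅ ℤ`; (iv) `Hom(M̂,K) = 0` and
`Hom(K, G/K) = 0`; (v) `K ∩ M̂ ≠ 0`.  Then `Hom(G, K) = 0`. -/
theorem hom_to_kernel_eq_zero
    {G : Type*} [AddCommGroup G] (K Mhat : AddSubgroup G)
    (hsum : K ⊔ Mhat = ⊤)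
    (hKtf : NoZeroSMulDivisors ℤ ↥K)
    (hfi : ∀ μ : G →+ G, ∀ x ∈ K, μ x ∈ K)
    (R : Subring ℚ)
    -- every endomorphism of K is multiplication by an element r = num/den of R
    (hEndK : ∀ f : ↥K →+ ↥K, ∃ r : R,
      ∀ x : ↥K, ((r : ℚ).den : ℤ) • f x = (r : ℚ).num • x)
    (hMtf : NoZeroSMulDivisors ℤ (G ⧸ K))
    (hEndM : ∀ φ : G ⧸ K →+ G ⧸ K, ∃ n : ℤ, ∀ x, φ x = n • x)
    (hMK : ∀ f : ↥Mhat →+ ↥K, f = 0)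
    (hKM : ∀ f : ↥K →+ G ⧸ K, f = 0)
    (hint : K ⊓ Mhat ≠ ⊥) :
    ∀ f : G →+ ↥K, f = 0 := by
  intro f
  obtain ⟨a, ha0⟩ := AddSubgroup.ne_bot_iff_exists_ne_zero.mp hint
  obtain ⟨haK, haM⟩ : (a : G) ∈ K ∧ (a : G) ∈ Mhat := a.2
  -- f vanishes on Mhat
  have hfM : ∀ m : G, m ∈ Mhat → f m = 0 := by
    intro m hm
    have := hMK (f.comp Mhat.subtype)
    have := congrFun (congrArg DFunLike.coe this) ⟨m, hm⟩
    simpa using this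
  -- the restriction of f to K
  obtain ⟨r, hr⟩ := hEndK (f.comp K.subtype)
  have hra := hr ⟨a, haK⟩
  have hfa : f (a : G) = 0 := hfM _ haM
  simp only [AddMonoidHom.comp_apply, AddSubgroup.coe_subtype, hfa, smul_zero] at hra
  have hnum : (r : ℚ).num = 0 := by
    rcases smul_eq_zero.mp hra.symm with h | h
    · exact h
    · exact absurd (by simpa using congrArg (Subtype.val) h) (by simpa using ha0)
  -- f vanishes on K
  have hfK : ∀ x : G, x ∈ K → f x = 0 := by
    intro x hx
    have := hr ⟨x, hx⟩
    rw [hnum, zero_smul] at this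
    simp only [AddMonoidHom.comp_apply, AddSubgroup.coe_subtype] at this
    rcases smul_eq_zero.mp this with h | h
    · exact absurd (by exact_mod_cast h) (r : ℚ).den_nz
    · exact h
  -- conclude
  ext x
  have hx : x ∈ K ⊔ Mhat := hsum ▸ AddSubgroup.mem_top x
  obtain ⟨y, hy, z, hz, rfl⟩ := AddSubgroup.mem_sup.mp hx
  simp [map_add, hfK y hy, hfM z hz]
end

section
/- Let G be an abelian group with subgroups K and M̂ such that G = K + M̂. Assume: K is torsion-free and fully invariant in G; K is an R-module for some subring R ⊆ ℚ with End(K) = R; G/K is torsion-free with End(G/K) ≅ ℤ; Hom(M̂, K) = 0 = Hom(K, G/K); and K ∩ M̂ ≠ 0. Then End(G) ≅ ℤ and the quotient map c : G → G/K is a cellular cover. -/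
/-!
An endomorphism `ν` of `G` with values in `K` vanishes: on `M̂` because `Hom(M̂, K) = 0`, and on
`K` because its restriction there is multiplication by a rational number that kills a nonzero
element of `K ∩ M̂`, hence is zero as `K` is torsion-free. So composing with `c : G → G/K` is
injective on `End(G)`. Full invariance of `K` lets every `μ ∈ End(G)` induce an endomorphism
`n • _` of `G/K`, and injectivity gives `μ = n • _`. Since `Hom(K, G/K) = 0`, every
`φ : G → G/K` factors through `G/K`, so `φ = n • c = c ∘ (n • _)`.
-/

open QuotientAddGroup

theorem AddMonoidHom.eq_zero_of_zsmul_map_eq_zsmul {A : Type*} [AddCommGroup A]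
    [NoZeroSMulDivisors ℤ A] (f : A →+ A) {d m : ℤ} (hd : d ≠ 0)
    (hf : ∀ x, d • f x = m • x) {a : A} (ha : a ≠ 0) (hfa : f a = 0) : f = 0 := by
  have hm : m = 0 := by
    have := hf a
    rw [hfa, smul_zero, eq_comm, smul_eq_zero] at this
    exact this.resolve_right ha
  ext x
  have := hf x
  rw [hm, zero_smul, smul_eq_zero] at this
  exact this.resolve_left hd

theorem AddMonoidHom.eq_zero_of_sup_le_ker {G H : Type*} [AddGroup G] [AddGroup H]
    (ν : G →+ H) {K M : AddSubgroup G} (hsum : K ⊔ M = ⊤) (hK : K ≤ ν.ker) (hM : M ≤ ν.ker) :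
    ν = 0 :=
  ker_eq_top_iff.mp (top_le_iff.mp (hsum ▸ sup_le hK hM))

section

variable {G : Type*} [AddCommGroup G] {K Mhat : AddSubgroup G}

theorem eq_zero_of_forall_mem_of_sup_eq_top (hsum : K ⊔ Mhat = ⊤)
    [NoZeroSMulDivisors ℤ K] {R : Subring ℚ}
    (hEndK : ∀ f : ↥K →+ ↥K, ∃ r : R, ∀ x : ↥K, ((r : ℚ).den : ℤ) • f x = (r : ℚ).num • x)
    (hMK : ∀ f : ↥Mhat →+ ↥K, f = 0) (hint : K ⊓ Mhat ≠ ⊥)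
    (ν : G →+ G) (hν : ∀ x, ν x ∈ K) : ν = 0 := by
  have hνM : Mhat ≤ ν.ker := fun x hx => ν.mem_ker.mpr <|
    congrArg Subtype.val (DFunLike.congr_fun (hMK ((ν.comp Mhat.subtype).codRestrict K
      fun y => hν y)) (⟨x, hx⟩ : Mhat))
  let νK : K →+ K := (ν.comp K.subtype).codRestrict K fun y => hν y
  obtain ⟨r, hr⟩ := hEndK νK
  obtain ⟨a, ⟨haK, haM⟩, ha⟩ := (AddSubgroup.bot_or_exists_ne_zero _).resolve_left hint
  have hνK : νK = 0 :=
    νK.eq_zero_of_zsmul_map_eq_zsmul (by exact_mod_cast (r : ℚ).den_nz) hr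
      (a := ⟨a, haK⟩) (fun h => ha (congrArg Subtype.val h)) (Subtype.ext (hνM haM))
  refine ν.eq_zero_of_sup_le_ker hsum (fun x hx => ?_) hνM
  exact ν.mem_ker.mpr (congrArg Subtype.val (DFunLike.congr_fun hνK (⟨x, hx⟩ : K)))

theorem mk'_comp_injective_of_sup_eq_top (hsum : K ⊔ Mhat = ⊤)
    [NoZeroSMulDivisors ℤ K] {R : Subring ℚ}
    (hEndK : ∀ f : ↥K →+ ↥K, ∃ r : R, ∀ x : ↥K, ((r : ℚ).den : ℤ) • f x = (r : ℚ).num • x)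
    (hMK : ∀ f : ↥Mhat →+ ↥K, f = 0) (hint : K ⊓ Mhat ≠ ⊥) :
    Function.Injective fun ψ : G →+ G => (mk' K).comp ψ := by
  intro ψ₁ ψ₂ h
  rw [← sub_eq_zero]
  refine eq_zero_of_forall_mem_of_sup_eq_top hsum hEndK hMK hint _ fun x => ?_
  rw [← eq_zero_iff, ← mk'_apply, ← AddMonoidHom.comp_apply, AddMonoidHom.comp_sub]
  simp only [h, sub_self, AddMonoidHom.zero_apply]

theorem exists_eq_zsmul_of_mk'_comp_injective
    (hEndM : ∀ φ : G ⧸ K →+ G ⧸ K, ∃ n : ℤ, ∀ x, φ x = n • x)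
    (hinj : Function.Injective fun ψ : G →+ G => (mk' K).comp ψ)
    (μ : G →+ G) (hμ : ∀ x ∈ K, μ x ∈ K) : ∃ n : ℤ, ∀ x, μ x = n • x := by
  obtain ⟨n, hn⟩ := hEndM (map K K μ hμ)
  refine ⟨n, fun x => DFunLike.congr_fun (hinj (a₂ := n • AddMonoidHom.id G) ?_) x⟩
  ext y
  simpa using (map_mk K K μ hμ y).symm.trans (hn y)

theorem mk'_comp_surjective
    (hEndM : ∀ φ : G ⧸ K →+ G ⧸ K, ∃ n : ℤ, ∀ x, φ x = n • x)
    (hKM : ∀ f : ↥K →+ G ⧸ K, f = 0) :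
    Function.Surjective fun ψ : G →+ G => (mk' K).comp ψ := by
  intro φ
  have hφ : K ≤ φ.ker := fun x hx => DFunLike.congr_fun (hKM (φ.comp K.subtype)) (⟨x, hx⟩ : K)
  obtain ⟨n, hn⟩ := hEndM (lift K φ hφ)
  refine ⟨n • AddMonoidHom.id G, ?_⟩
  ext x
  simpa using (hn x).symm

end

theorem end_int_and_quotient_cellular_cover_general
    {G : Type*} [AddCommGroup G] (K Mhat : AddSubgroup G)
    (hsum : K ⊔ Mhat = ⊤)
    (hKtf : NoZeroSMulDivisors ℤ ↥K)
    (hfi : ∀ μ : G →+ G, ∀ x ∈ K, μ x ∈ K)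
    (R : Subring ℚ)
    (hEndK : ∀ f : ↥K →+ ↥K, ∃ r : R,
      ∀ x : ↥K, ((r : ℚ).den : ℤ) • f x = (r : ℚ).num • x)
    (hEndM : ∀ φ : G ⧸ K →+ G ⧸ K, ∃ n : ℤ, ∀ x, φ x = n • x)
    (hMK : ∀ f : ↥Mhat →+ ↥K, f = 0)
    (hKM : ∀ f : ↥K →+ G ⧸ K, f = 0)
    (hint : K ⊓ Mhat ≠ ⊥) :
    (∀ μ : G →+ G, ∃ n : ℤ, ∀ x, μ x = n • x) ∧
    Function.Bijective fun ψ : G →+ G => (QuotientAddGroup.mk' K).comp ψ := by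
  have hinj := mk'_comp_injective_of_sup_eq_top hsum hEndK hMK hint
  exact ⟨fun μ => exists_eq_zsmul_of_mk'_comp_injective hEndM hinj μ (hfi μ),
    hinj, mk'_comp_surjective hEndM hKM⟩

/-- Under the hypotheses of Lemma cc.9: `G = K + M̂`, `K` torsion-free and fully
invariant, every endomorphism of `K` is multiplication by an element of a subring
`R ⊆ ℚ`, `G/K` torsion-free with `End(G/K) ≅ ℤ`, `Hom(M̂,K) = 0 = Hom(K,G/K)`,
and `K ∩ M̂ ≠ 0` --- then `End(G) ≅ ℤ` and the quotient map `G → G/K` is a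
cellular cover. -/
theorem end_int_and_quotient_cellular_cover
    {G : Type*} [AddCommGroup G] (K Mhat : AddSubgroup G)
    (hsum : K ⊔ Mhat = ⊤)
    (hKtf : NoZeroSMulDivisors ℤ ↥K)
    (hfi : ∀ μ : G →+ G, ∀ x ∈ K, μ x ∈ K)
    (R : Subring ℚ)
    (hEndK : ∀ f : ↥K →+ ↥K, ∃ r : R,
      ∀ x : ↥K, ((r : ℚ).den : ℤ) • f x = (r : ℚ).num • x)
    (hMtf : NoZeroSMulDivisors ℤ (G ⧸ K))
    (hEndM : ∀ φ : G ⧸ K →+ G ⧸ K, ∃ n : ℤ, ∀ x, φ x = n • x)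
    (hMK : ∀ f : ↥Mhat →+ ↥K, f = 0)
    (hKM : ∀ f : ↥K →+ G ⧸ K, f = 0)
    (hint : K ⊓ Mhat ≠ ⊥) :
    (∀ μ : G →+ G, ∃ n : ℤ, ∀ x, μ x = n • x) ∧
    Function.Bijective fun ψ : G →+ G => (QuotientAddGroup.mk' K).comp ψ :=
  end_int_and_quotient_cellular_cover_general K Mhat hsum hKtf hfi R hEndK hEndM hMK hKM hint
end

section
/- Let K and L be torsion-free abelian groups, x_K ∈ K and x_L ∈ L nonzero elements, q a prime, and set G = (K ⊕ L) ⊕_{(x_K - x_L)} ℤ[1/q], H = (x_K - x_L)·ℤ[1/q] ⊆ G, M̂ = L + H. Then K ∩ M̂ = ⟨x_K⟩ (the cyclic group generated by x_K) and M̂ = L ⊕ H. -/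
/-!
Write `w = x_K - x_L`. Every element `z` of `H` satisfies `q ^ i • z = m • w` for some `i` and
integer `m`. If moreover `z ∈ K ⊕ L` and `q ∤ m`, Bézout (`a q + b m = 1`) exhibits `w` as `q`
times an element of `K ⊕ L`, contradicting purity; so `q ∣ m`, and descending on `i` gives
`z ∈ ℤ w`. Hence `H ∩ (K ⊕ L) = ℤ w`, and both claims follow by comparing the `K`- and
`L`-components of elements of `K ⊕ L`.
-/

open AddSubgroup

theorem exists_eq_zsmul_of_pow_smul_eq_zsmul {G : Type*} [AddCommGroup G] [IsAddTorsionFree G]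
    {S : AddSubgroup G} {q : ℕ} (hq : q.Prime) {w : G} (hw : w ∈ S)
    (hpure : ¬∃ y ∈ S, w = q • y) {z : G} (hz : z ∈ S) :
    ∀ {i : ℕ} {m : ℤ}, q ^ i • z = m • w → ∃ n : ℤ, z = n • w
  | 0, m, h => ⟨m, by simpa using h⟩
  | i + 1, m, h => by
    have hqm : (q : ℤ) ∣ m := by
      by_contra hqm
      obtain ⟨a, b, hab⟩ := (Nat.prime_iff_prime_int.mp hq).coprime_iff_not_dvd.mpr hqm
      refine hpure ⟨a • w + b • q ^ i • z,
        add_mem (zsmul_mem hw a) (zsmul_mem (nsmul_mem hz _) b), ?_⟩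
      calc w = (a * q + b * m) • w := by rw [hab, one_smul]
        _ = (a * q) • w + b • (q ^ (i + 1) • z) := by rw [h]; module
        _ = q • (a • w + b • q ^ i • z) := by module
    obtain ⟨m', rfl⟩ := hqm
    refine exists_eq_zsmul_of_pow_smul_eq_zsmul hq hw hpure hz (i := i) (m := m')
      (nsmul_right_injective hq.ne_zero ?_)
    show q • q ^ i • z = q • m' • w
    rw [← mul_nsmul', ← pow_succ', h]
    module

theorem exists_pow_smul_eq_zsmul_of_mem_closure {V : Type*} [AddCommGroup V] [Module ℚ V]
    {q : ℕ} (hq : q ≠ 0) {w v : V}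
    (hv : v ∈ closure (Set.range fun i : ℕ => ((q : ℚ) ^ i)⁻¹ • w)) :
    ∃ (i : ℕ) (m : ℤ), q ^ i • v = m • w := by
  induction hv using closure_induction with
  | mem _ hv =>
    obtain ⟨i, rfl⟩ := hv
    refine ⟨i, 1, ?_⟩
    rw [← Nat.cast_smul_eq_nsmul ℚ, Nat.cast_pow, smul_inv_smul₀ (by positivity), one_smul]
  | zero => exact ⟨0, 0, by simp⟩
  | add a b _ _ iha ihb =>
    obtain ⟨i, m, ha⟩ := iha
    obtain ⟨j, n, hb⟩ := ihb
    refine ⟨i + j, q ^ j * m + q ^ i * n, ?_⟩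
    calc q ^ (i + j) • (a + b) = q ^ j • (q ^ i • a) + q ^ i • (q ^ j • b) := by module
      _ = _ := by rw [ha, hb]; module
  | neg a _ iha =>
    obtain ⟨i, m, ha⟩ := iha
    exact ⟨i, -m, by rw [smul_neg, ha, neg_smul]⟩

theorem closure_range_inv_pow_smul_inf_eq_zmultiples {V : Type*} [AddCommGroup V] [Module ℚ V]
    {S : AddSubgroup V} {q : ℕ} (hq : q.Prime) {w : V} (hw : w ∈ S)
    (hpure : ¬∃ y ∈ S, w = q • y) :
    closure (Set.range fun i : ℕ => ((q : ℚ) ^ i)⁻¹ • w) ⊓ S = zmultiples w := by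
  have := IsAddTorsionFree.of_module_rat V
  refine le_antisymm ?_ ?_
  · rintro z ⟨hzH, hzS⟩
    obtain ⟨i, m, h⟩ := exists_pow_smul_eq_zsmul_of_mem_closure hq.ne_zero hzH
    obtain ⟨n, rfl⟩ := exists_eq_zsmul_of_pow_smul_eq_zsmul hq hw hpure hzS h
    exact zsmul_mem_zmultiples w n
  · exact zmultiples_le.mpr ⟨subset_closure ⟨0, by simp⟩, hw⟩

theorem kernel_inter_Mhat_eq_and_direct_general
    {V : Type*} [AddCommGroup V] [Module ℚ V]
    (K L : AddSubgroup V) (hKL : K ⊓ L = ⊥)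
    (xK xL : V) (hxK : xK ∈ K) (hxL : xL ∈ L) (hxK0 : xK ≠ 0)
    (q : ℕ) (hq : q.Prime)
    (hpure : ¬∃ y ∈ K ⊔ L, xK - xL = q • y)
    (H : AddSubgroup V)
    (hH : H = AddSubgroup.closure
      (Set.range fun i : ℕ => ((q : ℚ) ^ i)⁻¹ • (xK - xL))) :
    K ⊓ (L ⊔ H) = AddSubgroup.zmultiples xK ∧ L ⊓ H = ⊥ := by
  have := IsAddTorsionFree.of_module_rat V
  have hdisj : ∀ {v}, v ∈ K → v ∈ L → v = 0 := disjoint_def.mp (disjoint_iff.mpr hKL)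
  have hHKL : H ⊓ (K ⊔ L) = zmultiples (xK - xL) := hH ▸
    closure_range_inv_pow_smul_inf_eq_zmultiples hq
      (sub_mem (mem_sup_left hxK) (mem_sup_right hxL)) hpure
  have hH_zmul : ∀ v ∈ H, v ∈ K ⊔ L → ∃ n : ℤ, n • (xK - xL) = v := fun v hvH hvKL =>
    mem_zmultiples_iff.mp (hHKL ▸ mem_inf.mpr ⟨hvH, hvKL⟩)
  refine ⟨le_antisymm ?_ ?_, eq_bot_iff.mpr ?_⟩
  · rintro k ⟨hk, hkM⟩
    obtain ⟨l, hl, h, hh, rfl⟩ := mem_sup.mp hkM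
    obtain ⟨n, rfl⟩ := hH_zmul h hh (by simpa using sub_mem (mem_sup_left hk) (mem_sup_right hl))
    have hkL : l + n • (xK - xL) - n • xK ∈ L := by
      rw [show l + n • (xK - xL) - n • xK = l - n • xL by module]
      exact sub_mem hl (zsmul_mem hxL n)
    have hk0 := hdisj (sub_mem hk (zsmul_mem hxK n)) hkL
    exact mem_zmultiples_iff.mpr ⟨n, (sub_eq_zero.mp hk0).symm⟩
  · have hw : xK - xL ∈ H := (hHKL.ge (mem_zmultiples _)).1
    exact zmultiples_le.mpr ⟨hxK, by simpa using add_mem (mem_sup_left hxL) (mem_sup_right hw)⟩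
  · rintro v ⟨hvL, hvH⟩
    obtain ⟨n, rfl⟩ := hH_zmul v hvH (mem_sup_right hvL)
    have hnL : n • xK ∈ L := by
      rw [show n • xK = n • (xK - xL) + n • xL by module]
      exact add_mem hvL (zsmul_mem hxL n)
    obtain rfl := (IsAddTorsionFree.zsmul_eq_zero_iff_left hxK0).mp
      (hdisj (zsmul_mem hxK n) hnL)
    simp

/-- Let `K, L` be torsion-free abelian groups realized as independent subgroups of a
`ℚ`-vector space `V` (so `K ⊕ L ⊆ V`), `x_K ∈ K`, `x_L ∈ L` nonzero, `q` prime with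
`x_K - x_L` `q`-pure in `K ⊕ L`.  With `H = (x_K - x_L)·ℤ[1/q]` and `M̂ = L + H`
inside `G = (K ⊕ L) ⊕_{x_K - x_L} ℤ[1/q]`, we have `K ∩ M̂ = ⟨x_K⟩` and
`M̂ = L ⊕ H`. -/
theorem kernel_inter_Mhat_eq_and_direct
    {V : Type*} [AddCommGroup V] [Module ℚ V]
    (K L : AddSubgroup V) (hKL : K ⊓ L = ⊥)
    (xK xL : V) (hxK : xK ∈ K) (hxL : xL ∈ L) (hxK0 : xK ≠ 0) (hxL0 : xL ≠ 0)
    (q : ℕ) (hq : q.Prime)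
    (hpure : ¬∃ y ∈ K ⊔ L, xK - xL = q • y)
    (H : AddSubgroup V)
    (hH : H = AddSubgroup.closure
      (Set.range fun i : ℕ => ((q : ℚ) ^ i)⁻¹ • (xK - xL))) :
    K ⊓ (L ⊔ H) = AddSubgroup.zmultiples xK ∧ L ⊓ H = ⊥ :=
  kernel_inter_Mhat_eq_and_direct_general K L hKL xK xL hxK hxL hxK0 q hq hpure H hH
end
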